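/- Let S be an inverse semigroup and define μ by (s,t) ∈ μ iff s·e·s⁻¹ = t·e·t⁻¹ for every idempotent e. Then S is fundamental (i.e., every element of S that commutes with all idempotents is itself an idempotent) if and only if μ is the equality relation on S. -/
import Mathlib

section Aux
variable {S : Type*} [Semigroup S]

/-- An idempotent is its own inverse. -/
lemma invSG_idem (inv : S → S)
    (huniq : ∀ a b : S, a * b * a = a → b * a * b = b → b = inv a)
    {e : S} (he : e * e = e) : inv e = e :=
  (huniq e e (by rw [he, he]) (by rw [he, he])).symm

/-- The product of two idempotents is idempotent. -/
lemma idem_mul_idem (inv : S → S)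
    (h1 : ∀ a : S, a * inv a * a = a)
    (h2 : ∀ a : S, inv a * a * inv a = inv a)
    (huniq : ∀ a b : S, a * b * a = a → b * a * b = b → b = inv a)
    {e f : S} (he : e * e = e) (hf : f * f = f) :
    (e * f) * (e * f) = e * f := by
  set x := inv (e * f) with hx
  have hx1 : (e * f) * x * (e * f) = e * f := h1 _
  have hx2 : x * (e * f) * x = x := h2 _
  have key : f * x * e = x := by
    refine huniq (e * f) (f * x * e) ?_ ?_
    · calc (e * f) * (f * x * e) * (e * f)
          = e * (f * f) * x * (e * e) * f := by simp only [mul_assoc]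
        _ = (e * f) * x * (e * f) := by rw [he, hf]; simp only [mul_assoc]
        _ = e * f := hx1
    · calc (f * x * e) * (e * f) * (f * x * e)
          = f * (x * ((e * e) * ((f * f) * x))) * e := by simp only [mul_assoc]
        _ = f * (x * (e * f) * x) * e := by rw [he, hf]; simp only [mul_assoc]
        _ = f * x * e := by rw [hx2]
  have hxidem : x * x = x := by
    calc x * x = (f * x * e) * (f * x * e) := by rw [key]
      _ = f * (x * (e * f) * x) * e := by simp only [mul_assoc]
      _ = f * x * e := by rw [hx2]
      _ = x := key
  have hefx : e * f = inv x := huniq x (e * f) hx2 hx1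
  rw [hefx, invSG_idem inv huniq hxidem, hxidem]

/-- Idempotents commute. -/
lemma idem_comm (inv : S → S)
    (h1 : ∀ a : S, a * inv a * a = a)
    (h2 : ∀ a : S, inv a * a * inv a = inv a)
    (huniq : ∀ a b : S, a * b * a = a → b * a * b = b → b = inv a)
    {e f : S} (he : e * e = e) (hf : f * f = f) :
    e * f = f * e := by
  have hef := idem_mul_idem inv h1 h2 huniq he hf
  have hfe := idem_mul_idem inv h1 h2 huniq hf he
  have k1 : (e * f) * (f * e) * (e * f) = e * f := by
    calc (e * f) * (f * e) * (e * f)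
        = e * ((f * f) * ((e * e) * f)) := by simp only [mul_assoc]
      _ = (e * f) * (e * f) := by rw [he, hf]; simp only [mul_assoc]
      _ = e * f := hef
  have k2 : (f * e) * (e * f) * (f * e) = f * e := by
    calc (f * e) * (e * f) * (f * e)
        = f * ((e * e) * ((f * f) * e)) := by simp only [mul_assoc]
      _ = (f * e) * (f * e) := by rw [he, hf]; simp only [mul_assoc]
      _ = f * e := hfe
  have hfe' : f * e = inv (e * f) := huniq (e * f) (f * e) k1 k2
  have hself : e * f = inv (e * f) :=
    huniq (e * f) (e * f) (by rw [hef, hef]) (by rw [hef, hef])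
  rw [hfe', ← hself]

lemma mul_inv_idem (inv : S → S) (h1 : ∀ a : S, a * inv a * a = a) (a : S) :
    (a * inv a) * (a * inv a) = a * inv a := by
  calc (a * inv a) * (a * inv a) = (a * inv a * a) * inv a := by simp only [mul_assoc]
    _ = a * inv a := by rw [h1]

lemma inv_mul_idem (inv : S → S) (h2 : ∀ a : S, inv a * a * inv a = inv a) (a : S) :
    (inv a * a) * (inv a * a) = inv a * a := by
  calc (inv a * a) * (inv a * a) = (inv a * a * inv a) * a := by simp only [mul_assoc]
    _ = inv a * a := by rw [h2]

end Aux

/-- The relation `μ`: `(s,t) ∈ μ` iff `s·e·s⁻¹ = t·e·t⁻¹` for all idempotents `e`. -/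
def muRel {S : Type*} [Semigroup S] (inv : S → S) (s t : S) : Prop :=
  ∀ e : S, e * e = e → s * e * inv s = t * e * inv t

/-- An inverse semigroup is fundamental iff `μ` is the equality relation. -/
theorem fundamental_iff_mu_trivial {S : Type*} [Semigroup S] (inv : S → S)
    (h1 : ∀ a : S, a * inv a * a = a)
    (h2 : ∀ a : S, inv a * a * inv a = inv a)
    (huniq : ∀ a b : S, a * b * a = a → b * a * b = b → b = inv a) :
    (∀ s : S, (∀ e : S, e * e = e → s * e = e * s) → s * s = s) ↔
    (∀ s t : S, muRel inv s t → s = t) := by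
  have comm : ∀ {e f : S}, e * e = e → f * f = f → e * f = f * e :=
    fun he hf => idem_comm inv h1 h2 huniq he hf
  constructor
  · intro hfund s t hst
    have hs's : (inv s * s) * (inv s * s) = inv s * s := inv_mul_idem inv h2 s
    have ht't : (inv t * t) * (inv t * t) = inv t * t := inv_mul_idem inv h2 t
    have hss : (s * inv s) * (s * inv s) = s * inv s := mul_inv_idem inv h1 s
    have htt : (t * inv t) * (t * inv t) = t * inv t := mul_inv_idem inv h1 t
    -- Step 1: s * inv s = t * inv t
    have e1 : s * inv s = t * (inv s * s) * inv t := by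
      have h := hst (inv s * s) hs's
      rw [← h, ← mul_assoc, h1]
    have e2 : t * inv t = s * (inv t * t) * inv s := by
      have h := hst (inv t * t) ht't
      rw [h, ← mul_assoc, h1]
    have m1 : (s * inv s) * (t * inv t) = s * inv s := by
      calc (s * inv s) * (t * inv t)
          = (t * (inv s * s) * inv t) * (t * inv t) := by rw [← e1]
        _ = t * (inv s * s) * (inv t * t * inv t) := by simp only [mul_assoc]
        _ = t * (inv s * s) * inv t := by rw [h2]
        _ = s * inv s := by rw [← e1]
    have m2 : (t * inv t) * (s * inv s) = t * inv t := by
      calc (t * inv t) * (s * inv s)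
          = (s * (inv t * t) * inv s) * (s * inv s) := by rw [← e2]
        _ = s * (inv t * t) * (inv s * s * inv s) := by simp only [mul_assoc]
        _ = s * (inv t * t) * inv s := by rw [h2]
        _ = t * inv t := by rw [← e2]
    have hST : s * inv s = t * inv t := by
      rw [← m1, comm hss htt, m2]
    -- Step 2: z = inv s * t commutes with all idempotents
    have hzcomm : ∀ e : S, e * e = e → (inv s * t) * e = e * (inv s * t) := by
      intro e he
      -- t * e = (t * e * inv t) * t
      have hte : (t * e * inv t) * t = t * e := by
        calc (t * e * inv t) * t = t * (e * (inv t * t)) := by simp only [mul_assoc]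
          _ = t * ((inv t * t) * e) := by rw [comm he ht't]
          _ = (t * inv t * t) * e := by simp only [mul_assoc]
          _ = t * e := by rw [h1]
      calc (inv s * t) * e = inv s * (t * e) := by rw [mul_assoc]
        _ = inv s * ((t * e * inv t) * t) := by rw [hte]
        _ = inv s * ((s * e * inv s) * t) := by rw [hst e he]
        _ = ((inv s * s) * e) * (inv s * t) := by simp only [mul_assoc]
        _ = (e * (inv s * s)) * (inv s * t) := by rw [comm hs's he]
        _ = e * ((inv s * s * inv s) * t) := by simp only [mul_assoc]
        _ = e * (inv s * t) := by rw [h2]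
    -- Step 3: z is idempotent by fundamentality
    have hz : (inv s * t) * (inv s * t) = inv s * t :=
      hfund _ fun e he => hzcomm e he
    -- Step 4: inv (inv s * t) = inv t * s, and an idempotent is its own inverse
    have hw : inv t * s = inv (inv s * t) := by
      refine huniq _ _ ?_ ?_
      · calc (inv s * t) * (inv t * s) * (inv s * t)
            = inv s * ((t * inv t) * ((s * inv s) * t)) := by simp only [mul_assoc]
          _ = inv s * ((s * inv s) * ((s * inv s) * t)) := by rw [hST]
          _ = inv s * (((s * inv s) * (s * inv s)) * t) := by simp only [mul_assoc]
          _ = (inv s * s * inv s) * t := by rw [hss]; simp only [mul_assoc]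
          _ = inv s * t := by rw [h2]
      · calc (inv t * s) * (inv s * t) * (inv t * s)
            = inv t * ((s * inv s) * ((t * inv t) * s)) := by simp only [mul_assoc]
          _ = inv t * ((t * inv t) * ((t * inv t) * s)) := by rw [hST]
          _ = inv t * (((t * inv t) * (t * inv t)) * s) := by simp only [mul_assoc]
          _ = (inv t * t * inv t) * s := by rw [htt]; simp only [mul_assoc]
          _ = inv t * s := by rw [h2]
    have hself : inv (inv s * t) = inv s * t := invSG_idem inv huniq hz
    have hwz : inv t * s = inv s * t := by rw [hw, hself]
    -- Step 5: conclude s = t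
    have hsz : s * (inv s * t) = t := by
      calc s * (inv s * t) = (s * inv s) * t := by rw [mul_assoc]
        _ = (t * inv t) * t := by rw [hST]
        _ = t := by rw [mul_assoc, ← mul_assoc, h1]
    have htz : t * (inv s * t) = t := by
      calc t * (inv s * t) = (s * (inv s * t)) * (inv s * t) := by rw [hsz]
        _ = s * ((inv s * t) * (inv s * t)) := by rw [mul_assoc]
        _ = s * (inv s * t) := by rw [hz]
        _ = t := hsz
    calc s = (s * inv s) * s := by rw [h1]
      _ = (t * inv t) * s := by rw [hST]
      _ = t * (inv t * s) := by rw [mul_assoc]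
      _ = t * (inv s * t) := by rw [hwz]
      _ = t := htz
  · intro htriv s hcomm
    have hss : (s * inv s) * (s * inv s) = s * inv s := mul_inv_idem inv h1 s
    have hinvss : inv (s * inv s) = s * inv s := invSG_idem inv huniq hss
    have hmu : muRel inv s (s * inv s) := by
      intro e he
      rw [hinvss]
      calc s * e * inv s = e * s * inv s := by rw [hcomm e he]
        _ = e * (s * inv s) := by rw [mul_assoc]
        _ = e * ((s * inv s) * (s * inv s)) := by rw [hss]
        _ = (e * (s * inv s)) * (s * inv s) := by simp only [mul_assoc]
        _ = (s * inv s) * e * (s * inv s) := by rw [comm he hss]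
    have hs : s = s * inv s := htriv _ _ hmu
    rw [hs]
    exact hss
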